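/- arXiv:2302.02288 — 9 statements merged into one kernel-verified Lean document; each statement's English description precedes it below -/
import Mathlib

section
/- Let Z1 and Z2 be independent random variables on a probability space (Ω, μ), each Uniform(0,1). Then the squared maximum (max(Z1, Z2))² is itself Uniform(0,1): for every z ∈ [0,1], μ({ω : (max(Z1 ω, Z2 ω))² ≤ z}) = z. -/
open MeasureTheory ProbabilityTheory Set

/-- If `Z1, Z2` are independent Uniform(0,1) random variables on `(Ω, μ)`,
then `(max (Z1, Z2))²` is itself Uniform(0,1): its CDF at `z ∈ [0,1]` equals `z`. -/
theorem sq_max_of_indep_uniform_is_uniform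
    {Ω : Type*} [MeasurableSpace Ω] (μ : Measure Ω) [IsProbabilityMeasure μ]
    (Z1 Z2 : Ω → ℝ) (hZ1 : Measurable Z1) (hZ2 : Measurable Z2)
    (hlaw1 : Measure.map Z1 μ = volume.restrict (Icc (0:ℝ) 1))
    (hlaw2 : Measure.map Z2 μ = volume.restrict (Icc (0:ℝ) 1))
    (hindep : IndepFun Z1 Z2 μ)
    (z : ℝ) (hz : z ∈ Icc (0:ℝ) 1) :
    μ {ω | (max (Z1 ω) (Z2 ω)) ^ 2 ≤ z} = ENNReal.ofReal z := by
  obtain ⟨hz0, hz1⟩ := hz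
  set s := Real.sqrt z with hs
  have hs0 : 0 ≤ s := Real.sqrt_nonneg z
  have hs1 : s ≤ 1 := by
    rw [hs, show (1:ℝ) = Real.sqrt 1 by simp]
    exact Real.sqrt_le_sqrt hz1
  have hss : s * s = z := Real.mul_self_sqrt hz0
  -- the preimage measures
  have hmeas1 : ∀ (t : Set ℝ), MeasurableSet t →
      μ (Z1 ⁻¹' t) = volume.restrict (Icc (0:ℝ) 1) t := by
    intro t ht
    rw [← hlaw1, Measure.map_apply hZ1 ht]
  have hmeas2 : ∀ (t : Set ℝ), MeasurableSet t →
      μ (Z2 ⁻¹' t) = volume.restrict (Icc (0:ℝ) 1) t := by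
    intro t ht
    rw [← hlaw2, Measure.map_apply hZ2 ht]
  have hIic : volume.restrict (Icc (0:ℝ) 1) (Iic s) = ENNReal.ofReal s := by
    rw [Measure.restrict_apply measurableSet_Iic]
    have : Iic s ∩ Icc (0:ℝ) 1 = Icc 0 s := by
      ext x
      simp only [mem_inter_iff, mem_Iic, mem_Icc]
      constructor
      · rintro ⟨h1, h2, _⟩; exact ⟨h2, h1⟩
      · rintro ⟨h1, h2⟩; exact ⟨h2, h1, h2.trans hs1⟩
    rw [this, Real.volume_Icc, sub_zero]
  have hZ1null : μ {ω | Z1 ω < 0} = 0 := by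
    have : {ω | Z1 ω < 0} = Z1 ⁻¹' Iio 0 := rfl
    rw [this, hmeas1 _ measurableSet_Iio, Measure.restrict_apply measurableSet_Iio]
    have : Iio (0:ℝ) ∩ Icc 0 1 = ∅ := by
      ext x; simp only [mem_inter_iff, mem_Iio, mem_Icc, mem_empty_iff_false, iff_false]
      rintro ⟨h1, h2, _⟩; linarith
    rw [this]; simp
  set A := Z1 ⁻¹' Iic s ∩ Z2 ⁻¹' Iic s with hA
  have hsub : {ω | (max (Z1 ω) (Z2 ω)) ^ 2 ≤ z} ⊆ A := by
    intro ω hω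
    simp only [mem_setOf_eq] at hω
    have h : |max (Z1 ω) (Z2 ω)| ≤ s := by
      rw [← Real.sqrt_sq_eq_abs]
      exact (Real.sqrt_le_sqrt hω)
    have h' : max (Z1 ω) (Z2 ω) ≤ s := le_trans (le_abs_self _) h
    exact ⟨le_trans (le_max_left _ _) h', le_trans (le_max_right _ _) h'⟩
  have hsub2 : A ⊆ {ω | (max (Z1 ω) (Z2 ω)) ^ 2 ≤ z} ∪ {ω | Z1 ω < 0} := by
    intro ω hω
    obtain ⟨h1, h2⟩ := hω
    by_cases hneg : Z1 ω < 0
    · exact Or.inr hneg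
    · left
      push_neg at hneg
      simp only [mem_setOf_eq]
      have hmax : 0 ≤ max (Z1 ω) (Z2 ω) := le_trans hneg (le_max_left _ _)
      have hmax2 : max (Z1 ω) (Z2 ω) ≤ s := max_le h1 h2
      calc (max (Z1 ω) (Z2 ω)) ^ 2 ≤ s ^ 2 := by
            exact pow_le_pow_left₀ hmax hmax2 2
        _ = z := by rw [sq, hss]
  have key : μ {ω | (max (Z1 ω) (Z2 ω)) ^ 2 ≤ z} = μ A := by
    refine le_antisymm (measure_mono hsub) ?_
    calc μ A ≤ μ ({ω | (max (Z1 ω) (Z2 ω)) ^ 2 ≤ z} ∪ {ω | Z1 ω < 0}) :=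
          measure_mono hsub2
      _ ≤ μ {ω | (max (Z1 ω) (Z2 ω)) ^ 2 ≤ z} + μ {ω | Z1 ω < 0} := measure_union_le _ _
      _ = μ {ω | (max (Z1 ω) (Z2 ω)) ^ 2 ≤ z} := by rw [hZ1null, add_zero]
  rw [key, hA, hindep.measure_inter_preimage_eq_mul _ _ measurableSet_Iic measurableSet_Iic,
    hmeas1 _ measurableSet_Iic, hmeas2 _ measurableSet_Iic, hIic,
    ← ENNReal.ofReal_mul hs0, hss]
end

section
/- Let δ ∈ (0,1), let z₁ > 0 satisfy Φ(z₁) = 1 − δ/2, and let S be a random variable on a probability space (Ω, μ) whose law is the centered Gaussian with variance 1/4 (the asymptotic law of the Sobel statistic under H00: α = β = 0). Then the size of the Sobel test under H00 equals μ({|S| > z₁}) = 2(1 − Φ(2z₁)), and this quantity is strictly less than δ; i.e., the Sobel test is conservative under H00. -/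
/-!
Under `H00` the Sobel statistic is `N(0, 1/4)` rather than `N(0, 1)`, so `2S` is standard normal
and `{|S| > z₁} = {|2S| > 2z₁}`. By symmetry of the Gaussian this event has probability
`2(1 - Φ(2z₁))`, and since `Φ` is strictly increasing, `Φ(2z₁) > Φ(z₁) = 1 - δ/2`.
-/

open MeasureTheory ProbabilityTheory Set
open scoped NNReal

lemma ENNReal.two_mul_one_sub_eq_ofReal {x : ENNReal} (hx : x ≤ 1) :
    2 * (1 - x) = ENNReal.ofReal (2 * (1 - x.toReal)) := by
  rw [← ENNReal.toReal_one, ← ENNReal.toReal_sub_of_le hx ENNReal.one_ne_top,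
    ← ENNReal.toReal_ofNat 2, ← ENNReal.toReal_mul, ENNReal.ofReal_toReal (by finiteness)]

namespace ProbabilityTheory

variable {v : ℝ≥0}

lemma gaussianReal_Iio_neg (a : ℝ) : gaussianReal 0 v (Iio (-a)) = gaussianReal 0 v (Ioi a) := by
  conv_lhs => rw [← neg_zero, ← gaussianReal_map_neg]
  rw [Measure.map_apply measurable_neg measurableSet_Iio]
  congr 1
  ext x
  simp

lemma gaussianReal_lt_abs {a : ℝ} (ha : 0 ≤ a) :
    gaussianReal 0 v {x | a < |x|} = 2 * (1 - gaussianReal 0 v (Iic a)) := by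
  have hsplit : {x : ℝ | a < |x|} = Iio (-a) ∪ Ioi a := by
    ext x
    simp [lt_abs, lt_neg, or_comm]
  rw [hsplit, measure_union (Iio_disjoint_Ioi_of_le (by linarith)) measurableSet_Ioi,
    gaussianReal_Iio_neg, ← two_mul, ← compl_Iic, prob_compl_eq_one_sub measurableSet_Iic]

lemma gaussianReal_lt_abs_div {c : ℝ} (hc : 0 < c) (a : ℝ) :
    gaussianReal 0 v {x | a < |x|} =
      gaussianReal 0 (v / .mk (c ^ 2) (sq_nonneg _)) {x | a / c < |x|} := by
  have hmap := gaussianReal_map_div_const (μ := 0) (v := v) c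
  rw [zero_div] at hmap
  rw [← hmap,
    Measure.map_apply (measurable_div_const c) (measurableSet_lt measurable_const measurable_abs)]
  congr 1
  ext x
  simp only [mem_preimage, mem_ofPred_eq, abs_div, abs_of_pos hc, div_lt_div_iff_of_pos_right hc]

lemma gaussianReal_Iic_strictMono (m : ℝ) (hv : v ≠ 0) :
    StrictMono fun a ↦ gaussianReal m v (Iic a) := by
  intro a b hab
  have hpos : 0 < gaussianReal m v (Ioc a b) := by
    rw [pos_iff_ne_zero]
    intro h0
    have := gaussianReal_absolutelyContinuous' m hv h0
    simp only [Real.volume_Ioc, ENNReal.ofReal_eq_zero] at this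
    linarith
  dsimp only
  rw [← Iic_union_Ioc_eq_Iic hab.le, measure_union (Iic_disjoint_Ioc le_rfl) measurableSet_Ioc]
  exact ENNReal.lt_add_right (measure_ne_top _ _) hpos.ne'

end ProbabilityTheory

theorem sobel_test_conservative_under_H00_general
    {Ω : Type*} [MeasurableSpace Ω] (μ : Measure Ω)
    (δ z₁ : ℝ) (hδ : δ ∈ Ioo (0:ℝ) 1) (hz₁pos : 0 < z₁)
    (hz₁ : gaussianReal 0 1 (Iic z₁) = ENNReal.ofReal (1 - δ / 2))
    (S : Ω → ℝ)
    (hlaw : Measure.map S μ = gaussianReal 0 (1/4 : ℝ≥0)) :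
    μ {ω | z₁ < |S ω|} =
        ENNReal.ofReal (2 * (1 - (gaussianReal 0 1 (Iic (2 * z₁))).toReal)) ∧
      μ {ω | z₁ < |S ω|} < ENNReal.ofReal δ := by
  have hS : AEMeasurable S μ :=
    .of_map_ne_zero (by rw [hlaw]; exact IsProbabilityMeasure.ne_zero _)
  have hstd : (1/4 : ℝ≥0) / .mk ((1/2) ^ 2) (sq_nonneg _) = 1 := by ext; norm_num
  have hsize : μ {ω | z₁ < |S ω|} = 2 * (1 - gaussianReal 0 1 (Iic (2 * z₁))) := by
    change μ (S ⁻¹' {x | z₁ < |x|}) = _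
    rw [← Measure.map_apply₀ hS (measurableSet_lt measurable_const measurable_abs).nullMeasurableSet,
      hlaw, gaussianReal_lt_abs_div one_half_pos, hstd, div_div_eq_mul_div, div_one, mul_comm,
      gaussianReal_lt_abs (by positivity)]
  have hΦ : ENNReal.ofReal (1 - δ / 2) < gaussianReal 0 1 (Iic (2 * z₁)) :=
    hz₁ ▸ gaussianReal_Iic_strictMono 0 one_ne_zero (by linarith)
  rw [hsize, ENNReal.two_mul_one_sub_eq_ofReal prob_le_one]
  refine ⟨rfl, (ENNReal.ofReal_lt_ofReal_iff hδ.1).mpr ?_⟩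
  have := (ENNReal.ofReal_lt_iff_lt_toReal (by linarith [hδ.2]) (measure_ne_top _ _)).mp hΦ
  linarith

/-- If `Φ(z₁) = 1 - δ/2` with `z₁ > 0`, `δ ∈ (0,1)`, and `S` has law
`N(0,1/4)` (the asymptotic law of the Sobel statistic under `H00`), then the size of the
Sobel test under `H00` is `μ(|S| > z₁) = 2(1 - Φ(2z₁))`, which is strictly less than `δ`:
the Sobel test is conservative under `H00`. -/
theorem sobel_test_conservative_under_H00
    {Ω : Type*} [MeasurableSpace Ω] (μ : Measure Ω) [IsProbabilityMeasure μ]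
    (δ z₁ : ℝ) (hδ : δ ∈ Ioo (0:ℝ) 1) (hz₁pos : 0 < z₁)
    (hz₁ : gaussianReal 0 1 (Iic z₁) = ENNReal.ofReal (1 - δ / 2))
    (S : Ω → ℝ) (hS : Measurable S)
    (hlaw : Measure.map S μ = gaussianReal 0 (1/4 : ℝ≥0)) :
    μ {ω | z₁ < |S ω|} =
        ENNReal.ofReal (2 * (1 - (gaussianReal 0 1 (Iic (2 * z₁))).toReal)) ∧
      μ {ω | z₁ < |S ω|} < ENNReal.ofReal δ :=
  sobel_test_conservative_under_H00_general μ δ z₁ hδ hz₁pos hz₁ S hlaw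
end

section
/- Let δ ∈ (0,1), let z₁ > 0 satisfy Φ(z₁) = 1 − δ/2, and let S be a random variable on a probability space (Ω, μ) whose law is the centered Gaussian with variance 1/4. Then μ({|S| ≤ z₁}) = 2Φ(2z₁) − 1, and 2Φ(2z₁) − 1 > 1 − δ. Consequently the asymptotic coverage probability of the classical Sobel-type confidence interval CI_Sobel strictly exceeds its nominal level 1 − δ when α = β = 0. -/
/-!
If `S ~ N(0, 1/4)` then `2S` is standard normal, so `P(|S| ≤ z₁) = P(|Z| ≤ 2z₁) = 2Φ(2z₁) - 1`
by the symmetry of `N(0, 1)`. As `Φ` is strictly increasing and `z₁ < 2z₁`, this exceeds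
`2Φ(z₁) - 1 = 1 - δ`.
-/

open MeasureTheory ProbabilityTheory Set
open scoped NNReal

lemma measureReal_Icc_neg_eq_two_mul_sub_one {ν : Measure ℝ} [IsProbabilityMeasure ν]
    (hν : ν.map (fun x ↦ -x) = ν) {b : ℝ} (hb : 0 ≤ b) :
    ν.real (Icc (-b) b) = 2 * ν.real (Iic b) - 1 := by
  have h_left : ν.real (Iio (-b)) = 1 - ν.real (Iic b) :=
    calc ν.real (Iio (-b)) = ν.real (Ioi b) := by
          conv_rhs => rw [← hν, map_measureReal_apply (by fun_prop) measurableSet_Ioi]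
          congr 1 with x
          simp
      _ = 1 - ν.real (Iic b) := by rw [← compl_Iic, probReal_compl_eq_one_sub measurableSet_Iic]
  have h_split : ν.real (Iic b) = ν.real (Iio (-b)) + ν.real (Icc (-b) b) := by
    rw [← measureReal_union ((Iio_disjoint_Ici le_rfl).mono_right Icc_subset_Ici_self)
      measurableSet_Icc, Iio_union_Icc_eq_Iic (by linarith)]
  linarith

lemma measureReal_Iic_strictMono {ν : Measure ℝ} [IsFiniteMeasure ν] (hν : volume ≪ ν) :
    StrictMono fun b ↦ ν.real (Iic b) := by
  intro a b hab
  have h_pos : 0 < ν.real (Ioc a b) := by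
    refine ENNReal.toReal_pos (fun h ↦ ?_) (measure_ne_top _ _)
    simpa [hab.not_ge] using hν h
  have h_split : ν.real (Iic b) = ν.real (Iic a) + ν.real (Ioc a b) := by
    rw [← measureReal_union (Iic_disjoint_Ioc le_rfl) measurableSet_Ioc,
      Iic_union_Ioc_eq_Iic hab.le]
  show ν.real (Iic a) < ν.real (Iic b)
  linarith

/-- If `Φ(z₁) = 1 - δ/2` with `z₁ > 0`, `δ ∈ (0,1)`, and `S` has law
`N(0,1/4)`, then `μ(|S| ≤ z₁) = 2Φ(2z₁) - 1 > 1 - δ`: the asymptotic coverage of the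
classical Sobel confidence interval strictly exceeds its nominal level `1 - δ` when
`α = β = 0`. -/
theorem sobel_ci_overcovers_under_H00
    {Ω : Type*} [MeasurableSpace Ω] (μ : Measure Ω) [IsProbabilityMeasure μ]
    (δ z₁ : ℝ) (hδ : δ ∈ Ioo (0:ℝ) 1) (hz₁pos : 0 < z₁)
    (hz₁ : gaussianReal 0 1 (Iic z₁) = ENNReal.ofReal (1 - δ / 2))
    (S : Ω → ℝ) (hS : Measurable S)
    (hlaw : Measure.map S μ = gaussianReal 0 (1/4 : ℝ≥0)) :
    μ {ω | |S ω| ≤ z₁} =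
        ENNReal.ofReal (2 * (gaussianReal 0 1 (Iic (2 * z₁))).toReal - 1) ∧
      1 - δ < 2 * (gaussianReal 0 1 (Iic (2 * z₁))).toReal - 1 := by
  have h_law : HasLaw (fun ω ↦ 2 * S ω) (gaussianReal 0 1) μ := by
    convert gaussianReal_const_mul ⟨hS.aemeasurable, hlaw⟩ 2 using 2
    · simp
    · ext; norm_num
  have h_symm : (gaussianReal 0 1).map (fun x ↦ -x) = gaussianReal 0 1 := by
    simpa using gaussianReal_map_neg (μ := 0) (v := 1)
  have h_cover : μ.real {ω | |S ω| ≤ z₁} = 2 * (gaussianReal 0 1).real (Iic (2 * z₁)) - 1 := by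
    have h_event : {ω | |S ω| ≤ z₁} = {ω | 2 * S ω ∈ Icc (-(2 * z₁)) (2 * z₁)} := by
      ext; simp [abs_le, ← mul_neg]
    rw [h_event, h_law.measureReal_eq (p := (· ∈ Icc _ _)) measurableSet_Icc, ofPred_mem_eq]
    exact measureReal_Icc_neg_eq_two_mul_sub_one h_symm (by linarith)
  have h_mono : (gaussianReal 0 1).real (Iic z₁) < (gaussianReal 0 1).real (Iic (2 * z₁)) :=
    measureReal_Iic_strictMono (gaussianReal_absolutelyContinuous' 0 one_ne_zero) (by linarith)
  have h_level : (gaussianReal 0 1).real (Iic z₁) = 1 - δ / 2 := by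
    rw [measureReal_def, hz₁, ENNReal.toReal_ofReal (by linarith [hδ.2])]
  refine ⟨by rw [← ofReal_measureReal, h_cover, measureReal_def], ?_⟩
  rw [← measureReal_def]
  linarith
end

section
/- Let δ ∈ (0,1) and let z_δ, z_√δ ∈ ℝ satisfy Φ(z_δ) = 1 − δ/2 and Φ(z_√δ) = 1 − √δ/2. Then 0 < z_√δ < z_δ, and for all μα, μβ ∈ ℝ, writing b(μ, z) = Φ(μ − z) + Φ(−μ − z), one has b(μα, z_δ)·b(μβ, z_δ) ≤ b(μα, z_√δ)·b(μβ, z_√δ). In other words, the conditional power of the AJS test on the event {T_max < λ_n}, namely b(μα, z_√δ)b(μβ, z_√δ), is at least its conditional power b(μα, z_δ)b(μβ, z_δ) on the event {T_max ≥ λ_n}, so Power(AJS) ≥ Power(JS). -/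
open MeasureTheory ProbabilityTheory Set

/-- The two-sided normal rejection probability `b(μ, z) = Φ(μ - z) + Φ(-μ - z)`. -/
noncomputable def twoSidedPower (m z : ℝ) : ℝ :=
  (gaussianReal 0 1 (Iic (m - z))).toReal + (gaussianReal 0 1 (Iic (-m - z))).toReal

lemma gaussianReal_map_neg' :
    (gaussianReal 0 1).map (fun x => (-1 : ℝ) * x) = gaussianReal 0 1 := by
  rw [gaussianReal_map_const_mul (-1 : ℝ)]
  norm_num

lemma gaussianReal_Iic_zero : gaussianReal (0:ℝ) 1 (Iic (0:ℝ)) = 1/2 := by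
  have hsing : gaussianReal (0:ℝ) 1 ({0} : Set ℝ) = 0 := by
    refine gaussianReal_absolutelyContinuous 0 one_ne_zero ?_
    simp
  have hIci : gaussianReal (0:ℝ) 1 (Ici (0:ℝ)) = gaussianReal (0:ℝ) 1 (Iic (0:ℝ)) := by
    conv_lhs => rw [← gaussianReal_map_neg']
    rw [Measure.map_apply (by fun_prop) measurableSet_Ici]
    congr 1
    ext x
    simp
  have huniv : gaussianReal (0:ℝ) 1 (Iic (0:ℝ)) + gaussianReal (0:ℝ) 1 (Ici (0:ℝ))
      = 1 + gaussianReal (0:ℝ) 1 ({0} : Set ℝ) := by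
    rw [← measure_union_add_inter (Iic 0) measurableSet_Ici]
    have h1 : Iic (0:ℝ) ∪ Ici 0 = univ := Iic_union_Ici
    have h2 : Iic (0:ℝ) ∩ Ici 0 = {0} := by ext x; simp [le_antisymm_iff, And.comm]
    rw [h1, h2, measure_univ]
  rw [hIci, hsing, add_zero] at huniv
  have : (2 : ENNReal) * gaussianReal (0:ℝ) 1 (Iic (0:ℝ)) = 1 := by
    rw [two_mul, huniv]
  exact (ENNReal.eq_div_iff (by norm_num) (by norm_num)).mpr this

/-- If `Φ(z_δ) = 1 - δ/2` and `Φ(z_√δ) = 1 - √δ/2` for `δ ∈ (0,1)`, then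
`0 < z_√δ < z_δ`, and for all `μα, μβ`, with `b(μ, z) = Φ(μ - z) + Φ(−μ − z)`,
`b(μα, z_δ)·b(μβ, z_δ) ≤ b(μα, z_√δ)·b(μβ, z_√δ)`: the conditional power of AJS on
`{T_max < λ_n}` dominates that on `{T_max ≥ λ_n}`, so `Power(AJS) ≥ Power(JS)`. -/
theorem ajs_power_dominates_js_power
    (δ zδ zsδ : ℝ) (hδ : δ ∈ Ioo (0:ℝ) 1)
    (hzδ : gaussianReal 0 1 (Iic zδ) = ENNReal.ofReal (1 - δ / 2))
    (hzsδ : gaussianReal 0 1 (Iic zsδ) = ENNReal.ofReal (1 - Real.sqrt δ / 2)) :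
    (0 < zsδ ∧ zsδ < zδ) ∧
      ∀ μα μβ : ℝ,
        twoSidedPower μα zδ * twoSidedPower μβ zδ ≤
          twoSidedPower μα zsδ * twoSidedPower μβ zsδ := by
  obtain ⟨hδ0, hδ1⟩ := hδ
  have hsδ0 : 0 < Real.sqrt δ := Real.sqrt_pos.mpr hδ0
  have hsδ1 : Real.sqrt δ < 1 := by
    rw [show (1:ℝ) = Real.sqrt 1 from (Real.sqrt_one).symm]
    exact Real.sqrt_lt_sqrt hδ0.le hδ1
  have hδlt : δ < Real.sqrt δ := by
    rw [Real.lt_sqrt hδ0.le]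
    nlinarith
  have hpos : 0 < zsδ := by
    by_contra h
    push_neg at h
    have hmono := measure_mono (μ := gaussianReal 0 1) (Iic_subset_Iic.mpr h)
    rw [hzsδ, gaussianReal_Iic_zero] at hmono
    have h12 : (1:ENNReal)/2 = ENNReal.ofReal (1/2) := by
      rw [ENNReal.ofReal_div_of_pos (by norm_num)]; norm_num
    rw [h12, ENNReal.ofReal_le_ofReal_iff (by norm_num)] at hmono
    nlinarith
  have hlt : zsδ < zδ := by
    by_contra h
    push_neg at h
    have hmono := measure_mono (μ := gaussianReal 0 1) (Iic_subset_Iic.mpr h)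
    rw [hzδ, hzsδ, ENNReal.ofReal_le_ofReal_iff (by nlinarith)] at hmono
    nlinarith
  refine ⟨⟨hpos, hlt⟩, fun μα μβ => ?_⟩
  have key : ∀ m : ℝ, twoSidedPower m zδ ≤ twoSidedPower m zsδ := by
    intro m
    unfold twoSidedPower
    have h1 : (gaussianReal 0 1 (Iic (m - zδ))).toReal ≤
        (gaussianReal 0 1 (Iic (m - zsδ))).toReal :=
      ENNReal.toReal_mono (measure_ne_top _ _)
        (measure_mono (Iic_subset_Iic.mpr (by linarith)))
    have h2 : (gaussianReal 0 1 (Iic (-m - zδ))).toReal ≤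
        (gaussianReal 0 1 (Iic (-m - zsδ))).toReal :=
      ENNReal.toReal_mono (measure_ne_top _ _)
        (measure_mono (Iic_subset_Iic.mpr (by linarith)))
    linarith
  have hnn : ∀ m z : ℝ, 0 ≤ twoSidedPower m z := fun m z =>
    add_nonneg ENNReal.toReal_nonneg ENNReal.toReal_nonneg
  exact mul_le_mul (key μα) (key μβ) (hnn μβ zδ) (hnn μα zsδ)
end

section
/- (Theorem 1, size under H00.) For each n let (Ω_n, μ_n) be a probability space carrying independent Uniform(0,1) random variables P_{α,n} and P_{β,n}, and let A_n ⊆ Ω_n be measurable events with μ_n(A_n) → 1 as n → ∞ (A_n represents {max(|T_α|,|T_β|) < λ_n}). Set P_{JS,n} = max(P_{α,n}, P_{β,n}) and define P_{AJS,n} = P_{JS,n}² on A_n and P_{AJS,n} = P_{JS,n} on the complement of A_n. Then for every δ ∈ (0,1), μ_n({P_{AJS,n} < δ}) → δ as n → ∞; i.e., the asymptotic size of the AJS test under H00 equals the nominal level δ. -/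
open MeasureTheory ProbabilityTheory Set Filter
open scoped Classical ENNReal

lemma marginal_lt_aux {Ω : Type*} [MeasurableSpace Ω] (μ : Measure Ω)
    (P : Ω → ℝ) (hP : Measurable P)
    (hlaw : Measure.map P μ = volume.restrict (Icc (0:ℝ) 1))
    {t : ℝ} (ht0 : 0 ≤ t) (ht1 : t ≤ 1) :
    μ (P ⁻¹' Iio t) = ENNReal.ofReal t := by
  rw [← Measure.map_apply hP measurableSet_Iio, hlaw,
    Measure.restrict_apply measurableSet_Iio]
  have h : Iio t ∩ Icc (0:ℝ) 1 = Ico 0 t := by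
    ext x
    simp only [mem_inter_iff, mem_Iio, mem_Icc, mem_Ico]
    constructor
    · rintro ⟨h1, h2, h3⟩; exact ⟨h2, h1⟩
    · rintro ⟨h1, h2⟩; exact ⟨h2, h1, le_trans h2.le ht1⟩
  rw [h, Real.volume_Ico, sub_zero]

/-- Theorem 1, size under H00: For each `n`, let `(Ω n, μ n)` carry
independent Uniform(0,1) p-values `Pα n, Pβ n` and measurable events `A n` with
`μ n (A n) → 1`.  With `P_JS = max (Pα, Pβ)` and `P_AJS = P_JS²` on `A n`, `P_JS` off
`A n`, the AJS rejection probability at level `δ ∈ (0,1)` tends to `δ`. -/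
theorem ajs_size_under_H00
    {Ω : ℕ → Type*} [∀ n, MeasurableSpace (Ω n)]
    (μ : ∀ n, Measure (Ω n)) [∀ n, IsProbabilityMeasure (μ n)]
    (Pα Pβ : ∀ n, Ω n → ℝ)
    (hPα : ∀ n, Measurable (Pα n)) (hPβ : ∀ n, Measurable (Pβ n))
    (hlawα : ∀ n, Measure.map (Pα n) (μ n) = volume.restrict (Icc (0:ℝ) 1))
    (hlawβ : ∀ n, Measure.map (Pβ n) (μ n) = volume.restrict (Icc (0:ℝ) 1))
    (hindep : ∀ n, IndepFun (Pα n) (Pβ n) (μ n))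
    (A : ∀ n, Set (Ω n)) (hA : ∀ n, MeasurableSet (A n))
    (hA1 : Tendsto (fun n => μ n (A n)) atTop (nhds 1))
    (PAJS : ∀ n, Ω n → ℝ)
    (hdef : ∀ n ω, PAJS n ω =
      if ω ∈ A n then (max (Pα n ω) (Pβ n ω)) ^ 2 else max (Pα n ω) (Pβ n ω))
    (δ : ℝ) (hδ : δ ∈ Ioo (0:ℝ) 1) :
    Tendsto (fun n => μ n {ω | PAJS n ω < δ}) atTop (nhds (ENNReal.ofReal δ)) := by
  obtain ⟨hδ0, hδ1⟩ := hδ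
  set s : ℝ := Real.sqrt δ with hs
  have hs0 : 0 ≤ s := Real.sqrt_nonneg δ
  have hs1 : s ≤ 1 := by
    rw [hs, show (1:ℝ) = Real.sqrt 1 by simp]
    exact Real.sqrt_le_sqrt hδ1.le
  have hssq : s * s = δ := Real.mul_self_sqrt hδ0.le
  -- B n : the event {max < s}
  have hBmeas : ∀ n, μ n {ω | max (Pα n ω) (Pβ n ω) < s} = ENNReal.ofReal δ := by
    intro n
    have hset : {ω | max (Pα n ω) (Pβ n ω) < s}
        = Pα n ⁻¹' Iio s ∩ Pβ n ⁻¹' Iio s := by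
      ext ω; simp [max_lt_iff]
    rw [hset, (hindep n).measure_inter_preimage_eq_mul _ _ measurableSet_Iio
      measurableSet_Iio,
      marginal_lt_aux (μ n) (Pα n) (hPα n) (hlawα n) hs0 hs1,
      marginal_lt_aux (μ n) (Pβ n) (hPβ n) (hlawβ n) hs0 hs1,
      ← ENNReal.ofReal_mul hs0, hssq]
  -- upper bound
  have hupper : ∀ n, μ n {ω | PAJS n ω < δ} ≤ ENNReal.ofReal δ := by
    intro n
    rw [← hBmeas n]
    apply measure_mono
    intro ω hω
    simp only [mem_setOf_eq] at hω ⊢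
    rw [hdef n ω] at hω
    by_cases hωA : ω ∈ A n
    · rw [if_pos hωA] at hω
      have h1 : |max (Pα n ω) (Pβ n ω)| < s := by
        rw [hs, ← Real.sqrt_sq_eq_abs]
        exact Real.sqrt_lt_sqrt (sq_nonneg _) hω
      exact lt_of_le_of_lt (le_abs_self _) h1
    · rw [if_neg hωA] at hω
      have hds : δ ≤ s := by nlinarith
      exact lt_of_lt_of_le hω hds
  -- lower bound
  have hlower : ∀ n, ENNReal.ofReal δ - (1 - μ n (A n)) ≤ μ n {ω | PAJS n ω < δ} := by
    intro n
    have hzero : μ n (Pα n ⁻¹' Iio 0) = 0 := by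
      rw [← Measure.map_apply (hPα n) measurableSet_Iio, hlawα n,
        Measure.restrict_apply measurableSet_Iio]
      have : Iio (0:ℝ) ∩ Icc 0 1 = ∅ := by
        ext x; simp only [mem_inter_iff, mem_Iio, mem_Icc, mem_empty_iff_false,
          iff_false, not_and]
        intro h h2; linarith
      rw [this]; simp
    have hsub : {ω | max (Pα n ω) (Pβ n ω) < s}
        ⊆ {ω | PAJS n ω < δ} ∪ (A n)ᶜ ∪ (Pα n ⁻¹' Iio 0) := by
      intro ω hω
      simp only [mem_setOf_eq] at hω
      by_cases hωA : ω ∈ A n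
      · by_cases h0 : Pα n ω < 0
        · exact Or.inr h0
        · left; left
          simp only [mem_setOf_eq]
          rw [hdef n ω, if_pos hωA]
          push_neg at h0
          have hm0 : 0 ≤ max (Pα n ω) (Pβ n ω) := le_trans h0 (le_max_left _ _)
          nlinarith
      · exact Or.inl (Or.inr hωA)
    have hb := measure_mono (μ := μ n) hsub
    rw [hBmeas n] at hb
    have hb2 : ENNReal.ofReal δ ≤ μ n {ω | PAJS n ω < δ} + (1 - μ n (A n)) := by
      calc ENNReal.ofReal δ
          ≤ μ n ({ω | PAJS n ω < δ} ∪ (A n)ᶜ ∪ (Pα n ⁻¹' Iio 0)) := hb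
        _ ≤ μ n ({ω | PAJS n ω < δ} ∪ (A n)ᶜ) + μ n (Pα n ⁻¹' Iio 0) :=
            measure_union_le (μ := μ n) _ _
        _ = μ n ({ω | PAJS n ω < δ} ∪ (A n)ᶜ) := by rw [hzero, add_zero]
        _ ≤ μ n {ω | PAJS n ω < δ} + μ n (A n)ᶜ := measure_union_le (μ := μ n) _ _
        _ = μ n {ω | PAJS n ω < δ} + (1 - μ n (A n)) := by
            rw [measure_compl (hA n) (measure_ne_top _ _), measure_univ]
    exact tsub_le_iff_right.mpr hb2
  -- squeeze
  have hcompl : Tendsto (fun n => (1:ℝ≥0∞) - μ n (A n)) atTop (nhds 0) := by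
    have := ENNReal.Tendsto.sub (tendsto_const_nhds (x := (1:ℝ≥0∞))) hA1
      (Or.inl ENNReal.one_ne_top)
    simpa using this
  have hlow : Tendsto (fun n => ENNReal.ofReal δ - (1 - μ n (A n))) atTop
      (nhds (ENNReal.ofReal δ)) := by
    have := ENNReal.Tendsto.sub (tendsto_const_nhds (x := ENNReal.ofReal δ)) hcompl
      (Or.inl ENNReal.ofReal_ne_top)
    simpa using this
  exact tendsto_of_tendsto_of_tendsto_of_le_of_le hlow tendsto_const_nhds
    (fun n => hlower n) (fun n => hupper n)
end

section
/- (Theorem 1, size under H10.) For each n let (Ω_n, μ_n) be a probability space carrying random variables P_{α,n} ≥ 0 and P_{β,n}, where P_{β,n} is Uniform(0,1) and P_{α,n} → 0 in probability (for every ε > 0, μ_n({P_{α,n} ≥ ε}) → 0), and let A_n ⊆ Ω_n be measurable events with μ_n(A_n) → 0. Set P_{JS,n} = max(P_{α,n}, P_{β,n}) and define P_{AJS,n} = P_{JS,n}² on A_n and P_{AJS,n} = P_{JS,n} on the complement of A_n. Then for every δ ∈ (0,1), μ_n({P_{AJS,n} < δ}) → δ as n → ∞; i.e., the asymptotic size of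 the AJS test under H10 equals the nominal level δ. -/
open MeasureTheory ProbabilityTheory Set Filter
open scoped Classical ENNReal symmDiff

/-! Outside `A n ∪ {δ ≤ P_α}` one has `P_AJS = max P_α P_β` with `P_α < δ`, so there the
AJS test rejects exactly when `P_β < δ`. The two rejection events therefore differ only on a
set whose probability tends to zero, and `P_β`, being uniform, rejects with probability `δ`. -/

theorem Set.symmDiff_subset_of_forall_notMem {α : Type*} {s t u : Set α}
    (h : ∀ x ∉ u, (x ∈ s ↔ x ∈ t)) : s ∆ t ⊆ u := by
  intro x hx
  by_contra hu
  rw [mem_symmDiff, h x hu] at hx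
  tauto

theorem measure_lt_eq_ofReal_of_map_eq_uniform {Ω : Type*} [MeasurableSpace Ω] {μ : Measure Ω}
    {X : Ω → ℝ} (hX : μ.map X = volume.restrict (Icc 0 1)) {δ : ℝ} (hδ : δ ≤ 1) :
    μ {ω | X ω < δ} = ENNReal.ofReal δ := by
  have hXm : AEMeasurable X μ := .of_map_ne_zero (by simp [hX])
  have hIco : Iio δ ∩ Icc 0 1 = Ico 0 δ := by
    ext x
    simp only [mem_inter_iff, mem_Iio, mem_Icc, mem_Ico]
    constructor
    · rintro ⟨hxδ, hx0, -⟩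
      exact ⟨hx0, hxδ⟩
    · rintro ⟨hx0, hxδ⟩
      exact ⟨hxδ, hx0, by linarith⟩
  change μ (X ⁻¹' Iio δ) = _
  rw [← Measure.map_apply_of_aemeasurable hXm measurableSet_Iio, hX,
    Measure.restrict_apply measurableSet_Iio, hIco, Real.volume_Ico, sub_zero]

theorem tendsto_measure_of_tendsto_measure_symmDiff {ι : Type*} {l : Filter ι}
    {Ω : ι → Type*} [∀ i, MeasurableSpace (Ω i)] {μ : ∀ i, Measure (Ω i)}
    {s t : ∀ i, Set (Ω i)} {c : ℝ≥0∞} (ht : Tendsto (fun i => μ i (t i)) l (nhds c))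
    (hst : Tendsto (fun i => μ i (s i ∆ t i)) l (nhds 0)) :
    Tendsto (fun i => μ i (s i)) l (nhds c) := by
  have hlower : ∀ i, μ i (t i) - μ i (s i ∆ t i) ≤ μ i (s i) := fun i => by
    have h := le_measure_symmDiff (μ := μ i) (s₁ := t i) (s₂ := s i)
    rw [symmDiff_comm] at h
    exact tsub_le_iff_right.mpr (tsub_le_iff_left.mp h)
  have hupper : ∀ i, μ i (s i) ≤ μ i (t i) + μ i (s i ∆ t i) := fun i =>
    tsub_le_iff_left.mp le_measure_symmDiff
  refine tendsto_of_tendsto_of_tendsto_of_le_of_le ?_ ?_ hlower hupper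
  · simpa using ENNReal.Tendsto.sub ht hst (Or.inr ENNReal.zero_ne_top)
  · simpa using ht.add hst

theorem ajs_size_under_H10_general
    {Ω : ℕ → Type*} [∀ n, MeasurableSpace (Ω n)]
    (μ : ∀ n, Measure (Ω n))
    (Pα Pβ : ∀ n, Ω n → ℝ)
    (hlawβ : ∀ n, Measure.map (Pβ n) (μ n) = volume.restrict (Icc (0:ℝ) 1))
    (hPα0 : ∀ ε : ℝ, 0 < ε →
      Tendsto (fun n => μ n {ω | ε ≤ Pα n ω}) atTop (nhds 0))
    (A : ∀ n, Set (Ω n))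
    (hA0 : Tendsto (fun n => μ n (A n)) atTop (nhds 0))
    (PAJS : ∀ n, Ω n → ℝ)
    (hdef : ∀ n ω, PAJS n ω =
      if ω ∈ A n then (max (Pα n ω) (Pβ n ω)) ^ 2 else max (Pα n ω) (Pβ n ω))
    (δ : ℝ) (hδ : δ ∈ Ioo (0:ℝ) 1) :
    Tendsto (fun n => μ n {ω | PAJS n ω < δ}) atTop (nhds (ENNReal.ofReal δ)) := by
  have hβ : ∀ n, μ n {ω | Pβ n ω < δ} = ENNReal.ofReal δ := fun n =>
    measure_lt_eq_ofReal_of_map_eq_uniform (hlawβ n) hδ.2.le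
  have hdiff : ∀ n, {ω | PAJS n ω < δ} ∆ {ω | Pβ n ω < δ} ⊆ A n ∪ {ω | δ ≤ Pα n ω} :=
    fun n => symmDiff_subset_of_forall_notMem fun ω hω => by
      simp only [mem_union, mem_ofPred_eq, not_or, not_le] at hω
      simp only [mem_ofPred_eq, hdef, if_neg hω.1, max_lt_iff, hω.2, true_and]
  refine tendsto_measure_of_tendsto_measure_symmDiff (t := fun n => {ω | Pβ n ω < δ}) ?_ ?_
  · simp only [hβ, tendsto_const_nhds]
  · exact tendsto_of_tendsto_of_tendsto_of_le_of_le tendsto_const_nhds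
      (by simpa using hA0.add (hPα0 δ hδ.1)) (fun _ => zero_le)
      fun n => (measure_mono (hdiff n)).trans (measure_union_le _ _)

/-- Theorem 1, size under H10: For each `n`, let `(Ω n, μ n)` carry
p-values `Pα n ≥ 0` and `Pβ n`, with `Pβ n` Uniform(0,1), `Pα n → 0` in probability,
and measurable events `A n` with `μ n (A n) → 0`.  With `P_JS = max (Pα, Pβ)` and
`P_AJS = P_JS²` on `A n`, `P_JS` off `A n`, the AJS rejection probability at level
`δ ∈ (0,1)` tends to `δ`. -/
theorem ajs_size_under_H10
    {Ω : ℕ → Type*} [∀ n, MeasurableSpace (Ω n)]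
    (μ : ∀ n, Measure (Ω n)) [∀ n, IsProbabilityMeasure (μ n)]
    (Pα Pβ : ∀ n, Ω n → ℝ)
    (hPα : ∀ n, Measurable (Pα n)) (hPβ : ∀ n, Measurable (Pβ n))
    (hPαnonneg : ∀ n ω, 0 ≤ Pα n ω)
    (hlawβ : ∀ n, Measure.map (Pβ n) (μ n) = volume.restrict (Icc (0:ℝ) 1))
    (hPα0 : ∀ ε : ℝ, 0 < ε →
      Tendsto (fun n => μ n {ω | ε ≤ Pα n ω}) atTop (nhds 0))
    (A : ∀ n, Set (Ω n)) (hA : ∀ n, MeasurableSet (A n))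
    (hA0 : Tendsto (fun n => μ n (A n)) atTop (nhds 0))
    (PAJS : ∀ n, Ω n → ℝ)
    (hdef : ∀ n ω, PAJS n ω =
      if ω ∈ A n then (max (Pα n ω) (Pβ n ω)) ^ 2 else max (Pα n ω) (Pβ n ω))
    (δ : ℝ) (hδ : δ ∈ Ioo (0:ℝ) 1) :
    Tendsto (fun n => μ n {ω | PAJS n ω < δ}) atTop (nhds (ENNReal.ofReal δ)) :=
  ajs_size_under_H10_general μ Pα Pβ hlawβ hPα0 A hA0 PAJS hdef δ hδ
end

section
/- (Power of the JS test, explicit formula.) Let μα, μβ ∈ ℝ, let Tα and Tβ be independent random variables on a probability space (Ω, P) with laws gaussianReal μα 1 and gaussianReal μβ 1 respectively, and define the p-values Pα = 2(1 − Φ(|Tα|)) and Pβ = 2(1 − Φ(|Tβ|)). Let δ ∈ (0,1) and z > 0 satisfy Φ(z) = 1 − δ/2. Then P({max(Pα, Pβ) < δ}) = [Φ(μα − z) + Φ(−μα − z)] · [Φ(μβ − z) + Φ(−μβ − z)]. -/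
open MeasureTheory ProbabilityTheory Set

lemma gauss_singleton (x : ℝ) : gaussianReal 0 1 {x} = 0 :=
  (gaussianReal_absolutelyContinuous 0 one_ne_zero) (measure_singleton x)

lemma gauss_Iio (a : ℝ) : gaussianReal 0 1 (Iio a) = gaussianReal 0 1 (Iic a) := by
  rw [← Iic_diff_right, measure_diff_null (gauss_singleton a)]

lemma gauss_neg_map : (gaussianReal 0 1).map (fun x => -x) = gaussianReal 0 1 := by
  have := gaussianReal_map_const_mul (μ := 0) (v := 1) (-1)
  simp only [neg_one_mul, mul_zero] at this
  convert this using 2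
  simp

lemma gauss_Iic_lt {a b : ℝ} (hab : a < b) :
    gaussianReal 0 1 (Iic a) < gaussianReal 0 1 (Iic b) := by
  have hpos : 0 < gaussianReal 0 1 (Ioc a b) := by
    rw [gaussianReal_apply_eq_integral 0 one_ne_zero]
    apply ENNReal.ofReal_pos.mpr
    rw [← intervalIntegral.integral_of_le hab.le]
    exact intervalIntegral.intervalIntegral_pos_of_pos_on
      ((integrable_gaussianPDFReal 0 1).intervalIntegrable)
      (fun x _ => gaussianPDFReal_pos 0 1 x one_ne_zero) hab
  have hunion : Iic b = Iic a ∪ Ioc a b := (Iic_union_Ioc_eq_Iic hab.le).symm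
  calc gaussianReal 0 1 (Iic a) < gaussianReal 0 1 (Iic a) + gaussianReal 0 1 (Ioc a b) :=
        ENNReal.lt_add_right (measure_ne_top _ _) hpos.ne'
    _ = gaussianReal 0 1 (Iic b) := by
        rw [hunion, measure_union _ measurableSet_Ioc]
        exact Iic_disjoint_Ioc le_rfl

lemma gauss_Ioi (a : ℝ) : gaussianReal 0 1 (Ioi a) = gaussianReal 0 1 (Iic (-a)) := by
  conv_lhs => rw [← gauss_neg_map]
  rw [Measure.map_apply measurable_neg measurableSet_Ioi]
  have : (fun x : ℝ => -x) ⁻¹' Ioi a = Iio (-a) := by ext x; simp [lt_neg]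
  rw [this, gauss_Iio]

lemma gauss_shift (μ : ℝ) (B : Set ℝ) (hB : MeasurableSet B) :
    gaussianReal μ 1 ((fun x => x - μ) ⁻¹' B) = gaussianReal 0 1 B := by
  have h : (gaussianReal μ 1).map (· + (-μ)) = gaussianReal 0 1 := by
    rw [gaussianReal_map_add_const]; simp
  rw [← h, Measure.map_apply (by fun_prop) hB]
  simp [sub_eq_add_neg]

lemma gauss_tail (μ z : ℝ) (hz : 0 < z) :
    gaussianReal μ 1 (Iio (-z) ∪ Ioi z) =
      gaussianReal 0 1 (Iic (μ - z)) + gaussianReal 0 1 (Iic (-μ - z)) := by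
  rw [measure_union _ measurableSet_Ioi]
  · have h1 : Iio (-z) = (fun x => x - μ) ⁻¹' Iio (-μ - z) := by
      ext x; simp; constructor <;> intro h <;> linarith
    have h2 : Ioi z = (fun x => x - μ) ⁻¹' Ioi (z - μ) := by
      ext x; simp
    rw [h1, h2, gauss_shift _ _ measurableSet_Iio, gauss_shift _ _ measurableSet_Ioi,
      gauss_Iio, gauss_Ioi]
    rw [add_comm]
    congr 2
    ring
  · exact Set.disjoint_left.mpr fun x hx hx' => by
      simp only [mem_Iio, mem_Ioi] at hx hx'; linarith

/-- power of the JS test: If `Tα ~ N(μα, 1)` and `Tβ ~ N(μβ, 1)` are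
independent, with two-sided p-values `Pα = 2(1 - Φ(|Tα|))`, `Pβ = 2(1 - Φ(|Tβ|))`, and
`z > 0` is the `(1 - δ/2)`-quantile of `N(0,1)` for `δ ∈ (0,1)`, then
`P(max(Pα, Pβ) < δ) = [Φ(μα - z) + Φ(-μα - z)]·[Φ(μβ - z) + Φ(-μβ - z)]`. -/
theorem js_power_formula
    {Ω : Type*} [MeasurableSpace Ω] (P : Measure Ω) [IsProbabilityMeasure P]
    (μα μβ : ℝ) (Tα Tβ : Ω → ℝ) (hTα : Measurable Tα) (hTβ : Measurable Tβ)
    (hlawα : Measure.map Tα P = gaussianReal μα 1)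
    (hlawβ : Measure.map Tβ P = gaussianReal μβ 1)
    (hindep : IndepFun Tα Tβ P)
    (Pa Pb : Ω → ℝ)
    (hPa : ∀ ω, Pa ω = 2 * (1 - (gaussianReal 0 1 (Iic |Tα ω|)).toReal))
    (hPb : ∀ ω, Pb ω = 2 * (1 - (gaussianReal 0 1 (Iic |Tβ ω|)).toReal))
    (δ z : ℝ) (hδ : δ ∈ Ioo (0:ℝ) 1) (hz : 0 < z)
    (hq : gaussianReal 0 1 (Iic z) = ENNReal.ofReal (1 - δ / 2)) :
    P {ω | max (Pa ω) (Pb ω) < δ} =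
      ENNReal.ofReal
        (((gaussianReal 0 1 (Iic (μα - z))).toReal +
            (gaussianReal 0 1 (Iic (-μα - z))).toReal) *
          ((gaussianReal 0 1 (Iic (μβ - z))).toReal +
            (gaussianReal 0 1 (Iic (-μβ - z))).toReal)) := by
  set S : Set ℝ := Iio (-z) ∪ Ioi z with hS
  have hSm : MeasurableSet S := measurableSet_Iio.union measurableSet_Ioi
  have hΦz : (gaussianReal 0 1 (Iic z)).toReal = 1 - δ / 2 := by
    rw [hq, ENNReal.toReal_ofReal (by linarith [hδ.2])]
  -- p-value < δ iff |T| > z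
  have key : ∀ (t : ℝ), (2 * (1 - (gaussianReal 0 1 (Iic |t|)).toReal) < δ ↔ t ∈ S) := by
    intro t
    have hmem : t ∈ S ↔ z < |t| := by
      simp only [hS, mem_union, mem_Iio, mem_Ioi, lt_abs, lt_neg, or_comm]
    rw [hmem]
    constructor
    · intro h
      by_contra hle
      push_neg at hle
      have hmono : (gaussianReal 0 1 (Iic |t|)).toReal ≤ (gaussianReal 0 1 (Iic z)).toReal :=
        ENNReal.toReal_mono (measure_ne_top _ _) (measure_mono (Iic_subset_Iic.mpr hle))
      rw [hΦz] at hmono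
      linarith
    · intro h
      have hlt : (gaussianReal 0 1 (Iic z)).toReal < (gaussianReal 0 1 (Iic |t|)).toReal :=
        ENNReal.toReal_lt_toReal (measure_ne_top _ _) (measure_ne_top _ _) |>.mpr
          (gauss_Iic_lt h)
      rw [hΦz] at hlt
      linarith
  have hevent : {ω | max (Pa ω) (Pb ω) < δ} = Tα ⁻¹' S ∩ Tβ ⁻¹' S := by
    ext ω
    simp only [mem_setOf_eq, max_lt_iff, mem_inter_iff, mem_preimage, hPa ω, hPb ω]
    rw [key (Tα ω), key (Tβ ω)]
  rw [hevent, hindep.measure_inter_preimage_eq_mul S S hSm hSm,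
    ← Measure.map_apply hTα hSm, ← Measure.map_apply hTβ hSm, hlawα, hlawβ,
    gauss_tail μα z hz, gauss_tail μβ z hz,
    ← ENNReal.toReal_add (measure_ne_top _ _) (measure_ne_top _ _),
    ← ENNReal.toReal_add (measure_ne_top _ _) (measure_ne_top _ _),
    ← ENNReal.toReal_mul,
    ENNReal.ofReal_toReal]
  exact ENNReal.mul_ne_top
    (ENNReal.add_ne_top.mpr ⟨measure_ne_top _ _, measure_ne_top _ _⟩)
    (ENNReal.add_ne_top.mpr ⟨measure_ne_top _ _, measure_ne_top _ _⟩)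
end

section
/- (Theorem 3, coverage of the adaptive Sobel confidence interval when αβ is not degenerate at (0,0).) Let δ ∈ (0,1) and let c₁ > 0 satisfy Φ(c₁) = 1 − δ/2, and let c₂ ∈ ℝ be arbitrary. For each n let S_n be a real random variable on a probability space (Ω_n, μ_n) such that the laws of S_n converge in distribution to the standard Gaussian gaussianReal 0 1, and let A_n ⊆ Ω_n be measurable events with μ_n(A_n) → 1. Then μ_n( ({|S_n| ≤ c₁} ∩ A_n) ∪ ({|S_n| ≤ c₂} ∩ A_nᶜ) ) → 1 − δ as n → ∞. -/
open MeasureTheory ProbabilityTheory Set Filter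
open scoped NNReal

/-!
On the event `A n`, whose probability tends to one, the coverage event coincides with
`{|S n| ≤ c₁}`, so the two have the same limiting probability. By the portmanteau theorem
that limit is the Gaussian mass of `[-c₁, c₁]`, which by symmetry of `N(0,1)` is
`1 - 2 (δ / 2) = 1 - δ`.
-/

section Symmetric

variable {ν : Measure ℝ}

lemma measure_Iic_eq_measure_Ioi_add_measure_Icc_neg (hν : ν.map (fun x ↦ -x) = ν)
    {c : ℝ} (hc : 0 ≤ c) : ν (Iic c) = ν (Ioi c) + ν (Icc (-c) c) := by
  have hIio : ν (Iio (-c)) = ν (Ioi c) := by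
    conv_lhs => rw [← hν]
    rw [Measure.map_apply (by fun_prop) measurableSet_Iio]
    congr 1
    ext x
    simp
  rw [← hIio, ← Iio_union_Icc_eq_Iic (a := -c) (by linarith),
    measure_union ((Iio_disjoint_Ici le_rfl).mono_right Icc_subset_Ici_self) measurableSet_Icc]

lemma measure_Icc_neg_eq_of_measure_Iic [IsProbabilityMeasure ν] (hν : ν.map (fun x ↦ -x) = ν)
    {c p : ℝ} (hc : 0 ≤ c) (hp : p ∈ Icc (0 : ℝ) 1)
    (hquantile : ν (Iic c) = ENNReal.ofReal (1 - p / 2)) :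
    ν (Icc (-c) c) = ENNReal.ofReal (1 - p) := by
  have hIoi : ν (Ioi c) = ENNReal.ofReal (p / 2) := by
    rw [← compl_Iic, prob_compl_eq_one_sub measurableSet_Iic, hquantile, ← ENNReal.ofReal_one,
      ← ENNReal.ofReal_sub _ (by linarith [hp.2])]
    ring_nf
  have hsplit := measure_Iic_eq_measure_Ioi_add_measure_Icc_neg hν hc
  rw [hquantile, hIoi, show 1 - p / 2 = p / 2 + (1 - p) by ring,
    ENNReal.ofReal_add (by linarith [hp.1]) (by linarith [hp.2])] at hsplit
  exact ((ENNReal.add_right_inj ENNReal.ofReal_ne_top).mp hsplit).symm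

end Symmetric

lemma tendsto_measure_abs_le_of_tendsto_map {ι : Type*} {l : Filter ι} {Ω : ι → Type*}
    [∀ i, MeasurableSpace (Ω i)] (μ : ∀ i, Measure (Ω i)) [∀ i, IsProbabilityMeasure (μ i)]
    (S : ∀ i, Ω i → ℝ) (hS : ∀ i, Measurable (S i)) {ν : ProbabilityMeasure ℝ}
    (hconv : Tendsto (β := ProbabilityMeasure ℝ)
      (fun i => (⟨Measure.map (S i) (μ i),
        Measure.isProbabilityMeasure_map (hS i).aemeasurable⟩ : ProbabilityMeasure ℝ))
      l (nhds ν))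
    {c : ℝ} (hc : 0 ≤ c) (hνc : (ν : Measure ℝ) {c} = 0) (hνc' : (ν : Measure ℝ) {-c} = 0) :
    Tendsto (fun i => μ i {ω | |S i ω| ≤ c}) l (nhds ((ν : Measure ℝ) (Icc (-c) c))) := by
  have hfrontier : (ν : Measure ℝ) (frontier (Icc (-c) c)) = 0 := by
    rw [frontier_Icc (by linarith), insert_eq]
    exact measure_union_null hνc' hνc
  refine (ProbabilityMeasure.tendsto_measure_of_null_frontier_of_tendsto' hconv hfrontier).congr
    fun i => ?_
  rw [ProbabilityMeasure.coe_mk, Measure.map_apply (hS i) measurableSet_Icc]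
  congr 1
  ext ω
  simp [abs_le]

lemma measure_le_add_measure_compl_of_inter_subset {Ω : Type*} [MeasurableSpace Ω]
    {μ : Measure Ω} {s t a : Set Ω} (h : s ∩ a ⊆ t) :
    μ s ≤ μ t + μ aᶜ :=
  (measure_le_inter_add_sdiff μ s a).trans
    (add_le_add (measure_mono h) (measure_mono (sdiff_subset_compl s a)))

lemma tendsto_measure_piecewise_of_tendsto_measure_one {ι : Type*} {l : Filter ι}
    {Ω : ι → Type*} [∀ i, MeasurableSpace (Ω i)] (μ : ∀ i, Measure (Ω i))
    [∀ i, IsProbabilityMeasure (μ i)] {A B C : ∀ i, Set (Ω i)} (hA : ∀ i, MeasurableSet (A i))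
    (hA1 : Tendsto (fun i => μ i (A i)) l (nhds 1)) {L : ENNReal}
    (hB : Tendsto (fun i => μ i (B i)) l (nhds L)) :
    Tendsto (fun i => μ i ((B i ∩ A i) ∪ (C i ∩ (A i)ᶜ))) l (nhds L) := by
  have hAc : Tendsto (fun i => μ i (A i)ᶜ) l (nhds 0) := by
    simp_rw [prob_compl_eq_one_sub (hA _)]
    simpa using ENNReal.Tendsto.sub tendsto_const_nhds hA1 (Or.inl ENNReal.one_ne_top)
  have hupper : ∀ i, μ i ((B i ∩ A i) ∪ (C i ∩ (A i)ᶜ)) ≤ μ i (B i) + μ i (A i)ᶜ := fun i =>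
    measure_le_add_measure_compl_of_inter_subset fun ω ⟨hω, hωA⟩ =>
      hω.elim And.left fun hωC => absurd hωA hωC.2
  have hlower : ∀ i, μ i (B i) - μ i (A i)ᶜ ≤ μ i ((B i ∩ A i) ∪ (C i ∩ (A i)ᶜ)) := fun i =>
    tsub_le_iff_right.mpr (measure_le_add_measure_compl_of_inter_subset subset_union_left)
  refine tendsto_of_tendsto_of_tendsto_of_le_of_le ?_ ?_ hlower hupper
  · simpa using ENNReal.Tendsto.sub hB hAc (Or.inr ENNReal.zero_ne_top)
  · simpa using hB.add hAc

/-- Theorem 3, coverage of the adaptive Sobel CI when `(α,β) ≠ (0,0)`: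
If `c₁ > 0` is the `(1-δ/2)`-quantile of `N(0,1)`, the laws of `S n` converge weakly to
`N(0,1)`, and `μ n (A n) → 1`, then the coverage probability
`μ n (({|S n| ≤ c₁} ∩ A n) ∪ ({|S n| ≤ c₂} ∩ (A n)ᶜ))` converges to `1 - δ`. -/
theorem asobel_ci_coverage_nondegenerate
    (δ : ℝ) (hδ : δ ∈ Ioo (0:ℝ) 1) (c₁ : ℝ) (hc₁pos : 0 < c₁)
    (hc₁ : gaussianReal 0 1 (Iic c₁) = ENNReal.ofReal (1 - δ / 2))
    (c₂ : ℝ)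
    {Ω : ℕ → Type*} [∀ n, MeasurableSpace (Ω n)]
    (μ : ∀ n, Measure (Ω n)) [∀ n, IsProbabilityMeasure (μ n)]
    (S : ∀ n, Ω n → ℝ) (hS : ∀ n, Measurable (S n))
    (hconv : Tendsto (β := ProbabilityMeasure ℝ)
      (fun n => (⟨Measure.map (S n) (μ n),
        Measure.isProbabilityMeasure_map (hS n).aemeasurable⟩ : ProbabilityMeasure ℝ))
      atTop (nhds ⟨gaussianReal 0 1, inferInstance⟩))
    (A : ∀ n, Set (Ω n)) (hA : ∀ n, MeasurableSet (A n))
    (hA1 : Tendsto (fun n => μ n (A n)) atTop (nhds 1)) :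
    Tendsto
      (fun n => μ n (({ω | |S n ω| ≤ c₁} ∩ A n) ∪ ({ω | |S n ω| ≤ c₂} ∩ (A n)ᶜ)))
      atTop (nhds (ENNReal.ofReal (1 - δ))) := by
  have hatom : ∀ x : ℝ, gaussianReal 0 1 {x} = 0 := fun x =>
    gaussianReal_absolutelyContinuous 0 one_ne_zero (measure_singleton x)
  have hsymm : (gaussianReal 0 1).map (fun x ↦ -x) = gaussianReal 0 1 := by
    rw [gaussianReal_map_neg, neg_zero]
  have hmass : gaussianReal 0 1 (Icc (-c₁) c₁) = ENNReal.ofReal (1 - δ) :=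
    measure_Icc_neg_eq_of_measure_Iic hsymm hc₁pos.le ⟨hδ.1.le, hδ.2.le⟩ hc₁
  have hcover := tendsto_measure_abs_le_of_tendsto_map μ S hS hconv hc₁pos.le (hatom _) (hatom _)
  rw [ProbabilityMeasure.coe_mk, hmass] at hcover
  exact tendsto_measure_piecewise_of_tendsto_measure_one μ hA hA1 hcover
end

section
/- (Asymptotic size of the ASobel test under H00.) Let δ ∈ (0,1), let c₂ > 0 satisfy Φ_{N(0,1/4)}(c₂) = 1 − δ/2, and let c₁ ∈ ℝ be arbitrary. For each n let S_n be a real random variable on a probability space (Ω_n, μ_n) such that the laws of S_n converge in distribution to gaussianReal 0 (1/4), and let A_n ⊆ Ω_n be measurable events with μ_n(A_n) → 1. Then the rejection probability of the adaptive Sobel test, μ_n( ({|S_n| > c₂} ∩ A_n) ∪ ({|S_n| > c₁} ∩ A_nᶜ) ), converges to δ as n → ∞. -/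
open MeasureTheory ProbabilityTheory Set Filter Topology
open scoped NNReal ENNReal

/-! On `A n` the test is the Sobel test with threshold `c₂`, and by the portmanteau theorem
(the boundary `{±c₂}` is Gaussian-null) its rejection probability tends to
`P(|N(0,1/4)| > c₂) = 2 · δ/2`, using the symmetry of the Gaussian. What happens on `(A n)ᶜ`
changes the rejection probability by at most `μ n (A n)ᶜ → 0`. -/

section SetIte

variable {α : Type*} [MeasurableSpace α] (μ : Measure α) (t s s' : Set α)

theorem measure_ite_le_add_compl : μ (t.ite s s') ≤ μ s + μ tᶜ :=
  (measure_mono fun _ hx => hx.imp And.left And.right).trans (measure_union_le _ _)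

theorem measure_le_measure_ite_add_compl : μ s ≤ μ (t.ite s s') + μ tᶜ := by
  refine (measure_mono fun x hx => ?_).trans (measure_union_le _ _)
  by_cases hxt : x ∈ t
  · exact Or.inl (Or.inl ⟨hx, hxt⟩)
  · exact Or.inr hxt

end SetIte

theorem tendsto_measure_ite_of_tendsto_measure_compl {ι : Type*} {l : Filter ι}
    {Ω : ι → Type*} [∀ i, MeasurableSpace (Ω i)] {μ : ∀ i, Measure (Ω i)}
    {t s s' : ∀ i, Set (Ω i)} {a : ℝ≥0∞}
    (hs : Tendsto (fun i => μ i (s i)) l (𝓝 a)) (ht : Tendsto (fun i => μ i (t i)ᶜ) l (𝓝 0)) :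
    Tendsto (fun i => μ i ((t i).ite (s i) (s' i))) l (𝓝 a) := by
  have hlower : Tendsto (fun i => μ i (s i) - μ i (t i)ᶜ) l (𝓝 a) := by
    simpa using ENNReal.Tendsto.sub hs ht (Or.inr ENNReal.zero_ne_top)
  have hupper : Tendsto (fun i => μ i (s i) + μ i (t i)ᶜ) l (𝓝 a) := by
    simpa using hs.add ht
  exact tendsto_of_tendsto_of_tendsto_of_le_of_le hlower hupper
    (fun i => tsub_le_iff_right.mpr (measure_le_measure_ite_add_compl _ _ _ _))
    (fun i => measure_ite_le_add_compl _ _ _ _)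

theorem frontier_setOf_lt_abs_subset (c : ℝ) : frontier {x : ℝ | c < |x|} ⊆ {c, -c} :=
  (frontier_lt_subset_eq continuous_const continuous_abs).trans
    fun _ hx => eq_or_eq_neg_of_abs_eq hx.symm

theorem tendsto_measure_setOf_lt_abs_of_tendsto {ι : Type*} {l : Filter ι}
    {νs : ι → ProbabilityMeasure ℝ} {ν : Measure ℝ} [IsProbabilityMeasure ν]
    [NullSingletonClass ν] (h : Tendsto νs l (𝓝 ⟨ν, ‹_›⟩)) (c : ℝ) :
    Tendsto (fun i => (νs i : Measure ℝ) {x | c < |x|}) l (𝓝 (ν {x | c < |x|})) :=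
  ProbabilityMeasure.tendsto_measure_of_null_frontier_of_tendsto' h
    (measure_mono_null (frontier_setOf_lt_abs_subset c) ((Set.toFinite _).measure_zero ν))

theorem gaussianReal_setOf_lt_abs {v : ℝ≥0} {c : ℝ} (hc : 0 ≤ c) :
    gaussianReal 0 v {x | c < |x|} = 2 * gaussianReal 0 v (Ioi c) := by
  have hsplit : {x : ℝ | c < |x|} = Iio (-c) ∪ Ioi c := by
    ext x
    simp only [mem_ofPred_eq, mem_union, mem_Iio, mem_Ioi, lt_abs]
    constructor <;> rintro (h | h) <;> first | (left; linarith) | (right; linarith)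
  have hsymm : gaussianReal 0 v (Iio (-c)) = gaussianReal 0 v (Ioi c) := by
    conv_lhs => rw [← neg_zero, ← gaussianReal_map_neg, Measure.map_apply measurable_neg
      measurableSet_Iio]
    congr 1
    ext x
    simp
  have hdisj : Disjoint (Iio (-c)) (Ioi c) :=
    Set.disjoint_left.mpr fun x (h₁ : x < -c) (h₂ : c < x) => by linarith
  rw [hsplit, measure_union hdisj measurableSet_Ioi, hsymm, two_mul]

theorem gaussianReal_setOf_lt_abs_of_quantile {v : ℝ≥0} {c δ : ℝ} (hc : 0 ≤ c) (hδ : δ ≤ 2)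
    (hquantile : gaussianReal 0 v (Iic c) = ENNReal.ofReal (1 - δ / 2)) :
    gaussianReal 0 v {x | c < |x|} = ENNReal.ofReal δ := by
  have htail : gaussianReal 0 v (Ioi c) = ENNReal.ofReal (δ / 2) := by
    rw [← compl_Iic, prob_compl_eq_one_sub measurableSet_Iic, hquantile, ← ENNReal.ofReal_one,
      ← ENNReal.ofReal_sub _ (by linarith)]
    ring_nf
  rw [gaussianReal_setOf_lt_abs hc, htail, ← ENNReal.ofReal_ofNat 2,
    ← ENNReal.ofReal_mul zero_le_two]
  ring_nf

/-- asymptotic size of the ASobel test under H00: If `c₂ > 0` is the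
`(1-δ/2)`-quantile of `N(0,1/4)`, the laws of `S n` converge weakly to `N(0,1/4)`, and
`μ n (A n) → 1`, then the ASobel rejection probability
`μ n (({|S n| > c₂} ∩ A n) ∪ ({|S n| > c₁} ∩ (A n)ᶜ))` converges to `δ`. -/
theorem asobel_test_size_H00
    (δ : ℝ) (hδ : δ ∈ Ioo (0:ℝ) 1) (c₂ : ℝ) (hc₂pos : 0 < c₂)
    (hc₂ : gaussianReal 0 (1/4 : ℝ≥0) (Iic c₂) = ENNReal.ofReal (1 - δ / 2))
    (c₁ : ℝ)
    {Ω : ℕ → Type*} [∀ n, MeasurableSpace (Ω n)]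
    (μ : ∀ n, Measure (Ω n)) [∀ n, IsProbabilityMeasure (μ n)]
    (S : ∀ n, Ω n → ℝ) (hS : ∀ n, Measurable (S n))
    (hconv : Tendsto
      (fun n => (⟨Measure.map (S n) (μ n),
        Measure.isProbabilityMeasure_map (hS n).aemeasurable⟩ : ProbabilityMeasure ℝ))
      atTop (nhds (X := ProbabilityMeasure ℝ) ⟨gaussianReal 0 (1/4 : ℝ≥0), inferInstance⟩))
    (A : ∀ n, Set (Ω n)) (hA : ∀ n, MeasurableSet (A n))
    (hA1 : Tendsto (fun n => μ n (A n)) atTop (nhds 1)) :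
    Tendsto
      (fun n => μ n (({ω | c₂ < |S n ω|} ∩ A n) ∪ ({ω | c₁ < |S n ω|} ∩ (A n)ᶜ)))
      atTop (nhds (ENNReal.ofReal δ)) := by
  have hreject : Tendsto (fun n => μ n {ω | c₂ < |S n ω|}) atTop (𝓝 (ENNReal.ofReal δ)) := by
    have : NullSingletonClass (gaussianReal 0 (1/4 : ℝ≥0)) :=
      nullSingletonClass_gaussianReal (by norm_num)
    have hlaw := tendsto_measure_setOf_lt_abs_of_tendsto hconv c₂
    simp only [ProbabilityMeasure.coe_mk, gaussianReal_setOf_lt_abs_of_quantile hc₂pos.le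
      (by linarith [hδ.2]) hc₂] at hlaw
    simp only [Measure.map_apply (hS _) (isOpen_lt continuous_const continuous_abs).measurableSet]
      at hlaw
    exact hlaw
  have hcompl : Tendsto (fun n => μ n (A n)ᶜ) atTop (𝓝 0) := by
    simp only [prob_compl_eq_one_sub (hA _)]
    simpa using ENNReal.Tendsto.sub tendsto_const_nhds hA1 (Or.inl ENNReal.one_ne_top)
  exact tendsto_measure_ite_of_tendsto_measure_compl hreject hcompl
end
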